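/- (Multi-class Neyman–Pearson sufficiency.) Fix a ∈ Fin 2 and c ∈ Fin K and assume μ{Y = y, A = a, C = c} > 0 for every y ∈ Fin N, with N ≥ 2. Let φ_1, …, φ_{N−1} ∈ [0,1], and let θ ∈ ℝ^N with θ_y ≥ 0 for all y and θ_N > 0. Suppose h_θ is a derived predictor (satisfying θ_{h_θ(x,a,c)} · r_{h_θ(x,a,c)}(x) = max_y θ_y · r_y(x) for every x with μ{X = x, A = a, C = c} > 0, where r_y(x) = μ{Y = y, X = x, A = a, C = c} / μ{X = x, A = a, C = c}) such that TP_{ac}^g(h_θ) = φ_g for all g ∈ {1, …, N−1}. Then for every predictor h with TP_{ac}^g(h) = φ_g for all g ∈ {1, …, N−1}, one has TP_{ac}^N(h) ≤ TP_{ac}^N(h_θ). -/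
import Mathlib


open scoped Classical
open Finset

/-- Probability of an event under a finite mass function `μ`. -/
noncomputable def pr {Ω : Type*} [Fintype Ω] (μ : Ω → ℝ) (P : Ω → Prop) : ℝ :=
  ∑ ω : Ω, if P ω then μ ω else 0

/-- `μ` is a probability mass function on the finite type `Ω`. -/
structure IsProbMass {Ω : Type*} [Fintype Ω] (μ : Ω → ℝ) : Prop where
  nonneg : ∀ ω, 0 ≤ μ ω
  total : ∑ ω : Ω, μ ω = 1

/-- True positive rate of the predictor `h` for class `y`, group `a` and client `c`:
`TP_{ac}^y(h) = μ{h(X,A,C) = y ∧ Y = y ∧ A = a ∧ C = c} / μ{Y = y ∧ A = a ∧ C = c}`. -/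
noncomputable def TP {Ω 𝒳 : Type*} [Fintype Ω] {K N : ℕ} (μ : Ω → ℝ)
    (X : Ω → 𝒳) (A : Ω → Fin 2) (C : Ω → Fin K) (Y : Ω → Fin N)
    (h : 𝒳 × Fin 2 × Fin K → Fin N) (y : Fin N) (a : Fin 2) (c : Fin K) : ℝ :=
  pr μ (fun ω => h (X ω, A ω, C ω) = y ∧ Y ω = y ∧ A ω = a ∧ C ω = c) /
    pr μ (fun ω => Y ω = y ∧ A ω = a ∧ C ω = c)

/-- Bayesian optimal score for group `a`, client `c`:
`r_y(x) = μ{Y = y ∧ X = x ∧ A = a ∧ C = c} / μ{X = x ∧ A = a ∧ C = c}`. -/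
noncomputable def score {Ω 𝒳 : Type*} [Fintype Ω] {K N : ℕ} (μ : Ω → ℝ)
    (X : Ω → 𝒳) (A : Ω → Fin 2) (C : Ω → Fin K) (Y : Ω → Fin N)
    (a : Fin 2) (c : Fin K) (y : Fin N) (x : 𝒳) : ℝ :=
  pr μ (fun ω => Y ω = y ∧ X ω = x ∧ A ω = a ∧ C ω = c) /
    pr μ (fun ω => X ω = x ∧ A ω = a ∧ C ω = c)

/-- `h` is a derived predictor for `(a, c)` and weight vector `θ`:
for every `x` in the support, `θ_{h(x,a,c)} ⬝ r_{h(x,a,c)}(x) = max_y θ_y ⬝ r_y(x)`. -/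
def IsDerivedPredictor {Ω 𝒳 : Type*} [Fintype Ω] {K N : ℕ} (μ : Ω → ℝ)
    (X : Ω → 𝒳) (A : Ω → Fin 2) (C : Ω → Fin K) (Y : Ω → Fin N)
    (a : Fin 2) (c : Fin K) (θ : Fin N → ℝ) (h : 𝒳 × Fin 2 × Fin K → Fin N) : Prop :=
  ∀ x : 𝒳, 0 < pr μ (fun ω => X ω = x ∧ A ω = a ∧ C ω = c) →
    IsGreatest (Set.range fun y => θ y * score μ X A C Y a c y x)
      (θ (h (x, a, c)) * score μ X A C Y a c (h (x, a, c)) x)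

/-- The region under the ROC hypersurface `D_{ac}`, where `hp θ` is the chosen derived
predictor for weight vector `θ`. -/
def RUS {Ω 𝒳 : Type*} [Fintype Ω] {K N : ℕ} (μ : Ω → ℝ)
    (X : Ω → 𝒳) (A : Ω → Fin 2) (C : Ω → Fin K) (Y : Ω → Fin N)
    (a : Fin 2) (c : Fin K)
    (hp : (Fin N → ℝ) → 𝒳 × Fin 2 × Fin K → Fin N) : Set (Fin N → ℝ) :=
  ⋂ θ ∈ {θ : Fin N → ℝ | ∀ y, 0 ≤ θ y},
    {v : Fin N → ℝ | (∀ y, v y ∈ Set.Icc (0 : ℝ) 1) ∧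
      ∑ y : Fin N, θ y * (pr μ (fun ω => Y ω = y ∧ A ω = a ∧ C ω = c) /
          pr μ (fun ω => A ω = a ∧ C ω = c)) * v y ≤
      ∑ y : Fin N, θ y * (pr μ (fun ω => Y ω = y ∧ A ω = a ∧ C ω = c) /
          pr μ (fun ω => A ω = a ∧ C ω = c)) * TP μ X A C Y (hp θ) y a c}


lemma pr_nonneg {Ω : Type*} [Fintype Ω] {μ : Ω → ℝ} (hμ : ∀ ω, 0 ≤ μ ω) (P : Ω → Prop) :
    0 ≤ pr μ P :=
  Finset.sum_nonneg fun ω _ => by by_cases h : P ω <;> simp [h, hμ ω]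

lemma pr_mono {Ω : Type*} [Fintype Ω] {μ : Ω → ℝ} (hμ : ∀ ω, 0 ≤ μ ω) {P Q : Ω → Prop}
    (hPQ : ∀ ω, P ω → Q ω) : pr μ P ≤ pr μ Q := by
  refine Finset.sum_le_sum fun ω _ => ?_
  by_cases h : P ω
  · simp [h, hPQ ω h]
  · by_cases h' : Q ω <;> simp [h, h', hμ ω]

lemma pr_congr {Ω : Type*} [Fintype Ω] (μ : Ω → ℝ) {P Q : Ω → Prop}
    (hPQ : ∀ ω, P ω ↔ Q ω) : pr μ P = pr μ Q := by
  unfold pr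
  exact Finset.sum_congr rfl fun ω _ => by rw [hPQ ω]

lemma pr_eq_zero {Ω : Type*} [Fintype Ω] (μ : Ω → ℝ) {P : Ω → Prop}
    (hP : ∀ ω, ¬ P ω) : pr μ P = 0 := by
  unfold pr
  exact Finset.sum_eq_zero fun ω _ => by simp [hP ω]

lemma pr_partition {Ω 𝒳 : Type*} [Fintype Ω] [Fintype 𝒳] (μ : Ω → ℝ) (X : Ω → 𝒳)
    (P : Ω → Prop) : pr μ P = ∑ x : 𝒳, pr μ (fun ω => X ω = x ∧ P ω) := by
  unfold pr
  rw [Finset.sum_comm]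
  refine Finset.sum_congr rfl fun ω _ => ?_
  by_cases hP : P ω
  · rw [if_pos hP, Finset.sum_eq_single (X ω)]
    · rw [if_pos ⟨rfl, hP⟩]
    · intro x _ hx
      rw [if_neg]
      rintro ⟨h1, -⟩
      exact hx h1.symm
    · intro hx
      exact absurd (Finset.mem_univ _) hx
  · rw [if_neg hP]
    symm
    refine Finset.sum_eq_zero fun x _ => ?_
    rw [if_neg]
    rintro ⟨-, h2⟩
    exact hP h2

/-- multi-class Neyman–Pearson sufficiency: a derived predictor meeting the
true-positive constraints `φ_g` on the first `N-1` classes maximizes the true positive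
rate of the last class among all predictors meeting these constraints. -/
theorem neyman_pearson_multiclass
    {Ω 𝒳 : Type*} [Fintype Ω] [Nonempty Ω] [Fintype 𝒳] {K n : ℕ}
    (hK : 0 < K) (hn : 1 ≤ n)
    (μ : Ω → ℝ) (hμ : IsProbMass μ)
    (X : Ω → 𝒳) (A : Ω → Fin 2) (C : Ω → Fin K) (Y : Ω → Fin (n + 1))
    (a : Fin 2) (c : Fin K)
    (hpos : ∀ y : Fin (n + 1), 0 < pr μ (fun ω => Y ω = y ∧ A ω = a ∧ C ω = c))
    (φ : Fin (n + 1) → ℝ) (hφ : ∀ g, g ≠ Fin.last n → φ g ∈ Set.Icc (0 : ℝ) 1)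
    (θ : Fin (n + 1) → ℝ) (hθ : ∀ y, 0 ≤ θ y) (hθlast : 0 < θ (Fin.last n))
    (hp : 𝒳 × Fin 2 × Fin K → Fin (n + 1))
    (hderiv : IsDerivedPredictor μ X A C Y a c θ hp)
    (hpφ : ∀ g, g ≠ Fin.last n → TP μ X A C Y hp g a c = φ g) :
    ∀ h : 𝒳 × Fin 2 × Fin K → Fin (n + 1),
      (∀ g, g ≠ Fin.last n → TP μ X A C Y h g a c = φ g) →
      TP μ X A C Y h (Fin.last n) a c ≤ TP μ X A C Y hp (Fin.last n) a c := by
  intro h hh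
  -- notation
  set q : Fin (n + 1) → 𝒳 → ℝ := fun y x =>
    pr μ (fun ω => Y ω = y ∧ X ω = x ∧ A ω = a ∧ C ω = c) with hq
  set p : 𝒳 → ℝ := fun x => pr μ (fun ω => X ω = x ∧ A ω = a ∧ C ω = c) with hpdef
  set num : (𝒳 × Fin 2 × Fin K → Fin (n + 1)) → Fin (n + 1) → ℝ := fun h' y =>
    pr μ (fun ω => h' (X ω, A ω, C ω) = y ∧ Y ω = y ∧ A ω = a ∧ C ω = c) with hnumdef
  set den : Fin (n + 1) → ℝ := fun y =>
    pr μ (fun ω => Y ω = y ∧ A ω = a ∧ C ω = c) with hdendef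
  have hden : ∀ y, 0 < den y := hpos
  have hTP : ∀ h' y, TP μ X A C Y h' y a c = num h' y / den y := fun _ _ => rfl
  -- decompose num over x
  have hnum : ∀ (h' : 𝒳 × Fin 2 × Fin K → Fin (n + 1)) (y : Fin (n + 1)),
      num h' y = ∑ x : 𝒳, if h' (x, a, c) = y then q y x else 0 := by
    intro h' y
    rw [hnumdef]
    simp only
    rw [pr_partition μ X]
    refine Finset.sum_congr rfl fun x _ => ?_
    by_cases hx : h' (x, a, c) = y
    · simp only [hx, if_true, hq]
      refine pr_congr μ fun ω => ?_
      constructor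
      · rintro ⟨hX, _, hY, hA, hC⟩
        exact ⟨hY, hX, hA, hC⟩
      · rintro ⟨hY, hX, hA, hC⟩
        refine ⟨hX, ?_, hY, hA, hC⟩
        rw [hX, hA, hC, hx]
    · simp only [hx, if_false]
      refine pr_eq_zero μ fun ω => ?_
      rintro ⟨hX, hh', hY, hA, hC⟩
      rw [hX, hA, hC] at hh'
      exact hx hh'
  -- weighted sum over classes = sum over x of the pointwise objective
  have hsum : ∀ h' : 𝒳 × Fin 2 × Fin K → Fin (n + 1),
      ∑ y : Fin (n + 1), θ y * num h' y =
        ∑ x : 𝒳, θ (h' (x, a, c)) * q (h' (x, a, c)) x := by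
    intro h'
    simp only [hnum, Finset.mul_sum]
    rw [Finset.sum_comm]
    refine Finset.sum_congr rfl fun x _ => ?_
    have hterm : ∀ y : Fin (n + 1), θ y * (if h' (x, a, c) = y then q y x else 0)
        = if h' (x, a, c) = y then θ y * q y x else 0 := fun y => by
      by_cases hxy : h' (x, a, c) = y <;> simp [hxy]
    rw [Finset.sum_congr rfl fun y _ => hterm y, Finset.sum_ite_eq]
    simp
  -- pointwise optimality of hp
  have hpt : ∀ x : 𝒳, θ (h (x, a, c)) * q (h (x, a, c)) x ≤
      θ (hp (x, a, c)) * q (hp (x, a, c)) x := by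
    intro x
    have hqnn : ∀ y, 0 ≤ q y x := fun y => pr_nonneg hμ.nonneg _
    have hqle : ∀ y, q y x ≤ p x := fun y =>
      pr_mono hμ.nonneg fun ω => by rintro ⟨_, h2, h3, h4⟩; exact ⟨h2, h3, h4⟩
    by_cases hpx : 0 < p x
    · have hg := hderiv x hpx
      have hub := hg.2 (Set.mem_range_self (h (x, a, c)))
      have hscore : ∀ y, q y x = score μ X A C Y a c y x * p x := fun y => by
        rw [score]
        rw [div_mul_cancel₀ _ (ne_of_gt hpx)]
      calc θ (h (x, a, c)) * q (h (x, a, c)) x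
          = θ (h (x, a, c)) * score μ X A C Y a c (h (x, a, c)) x * p x := by
            rw [hscore]; ring
        _ ≤ θ (hp (x, a, c)) * score μ X A C Y a c (hp (x, a, c)) x * p x :=
            mul_le_mul_of_nonneg_right hub hpx.le
        _ = θ (hp (x, a, c)) * q (hp (x, a, c)) x := by rw [hscore]; ring
    · have hpx0 : p x = 0 := le_antisymm (not_lt.mp hpx) (pr_nonneg hμ.nonneg _)
      have hq0 : ∀ y, q y x = 0 := fun y => le_antisymm (hpx0 ▸ hqle y) (hqnn y)
      simp [hq0]
  have key : ∑ y : Fin (n + 1), θ y * num h y ≤ ∑ y : Fin (n + 1), θ y * num hp y := by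
    rw [hsum h, hsum hp]
    exact Finset.sum_le_sum fun x _ => hpt x
  -- equal numerators on constrained classes
  have hnum_eq : ∀ g, g ≠ Fin.last n → num h g = num hp g := by
    intro g hg
    have h1 : TP μ X A C Y h g a c = TP μ X A C Y hp g a c := by
      rw [hh g hg, hpφ g hg]
    rw [hTP, hTP] at h1
    have hd := (hden g).ne'
    field_simp at h1
    exact h1
  -- reduce to last class
  have hlast : θ (Fin.last n) * num h (Fin.last n) ≤ θ (Fin.last n) * num hp (Fin.last n) := by
    have e1 : ∑ y ∈ Finset.univ.erase (Fin.last n), θ y * num h y =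
        ∑ y ∈ Finset.univ.erase (Fin.last n), θ y * num hp y :=
      Finset.sum_congr rfl fun g hg => by rw [hnum_eq g (Finset.ne_of_mem_erase hg)]
    have e2 := Finset.add_sum_erase Finset.univ (fun y => θ y * num h y)
      (Finset.mem_univ (Fin.last n))
    have e3 := Finset.add_sum_erase Finset.univ (fun y => θ y * num hp y)
      (Finset.mem_univ (Fin.last n))
    rw [← e2, ← e3, e1] at key
    linarith
  have hnle : num h (Fin.last n) ≤ num hp (Fin.last n) :=
    le_of_mul_le_mul_left hlast hθlast
  rw [hTP, hTP]
  gcongr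
  exact (hden (Fin.last n)).le
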